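/- For PSD matrices Q and weights β ∈ (0,1), if random matrices E_1,...,E_t ∈ R^{m×n} are uncorrelated across time with E[E_s E_r^T] = 0 for s ≠ r and E[E_s E_s^T] ⪯ Q² for each s, then E||Σ_{s=1}^t β^{t−s} E_s||_* ≤ tr(√(Σ_{s=1}^t β^{2(t−s)} Q²)) = ||Q||_* / √(1−β²) in the limit; in particular E||Σ_{s=1}^t β^{t−s} E_s||_* ≤ ||Q||_*/√(1−β²). -/

import Mathlib

/-! Jensen's inequality for the concave map `M ↦ tr √M` is replaced by its linear majorants:
for every positive definite `S`, `tr √M ≤ (tr (S⁻¹ M) + tr S) / 2` (expand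
`tr (S⁻¹ (√M - S)²) ≥ 0`). Being linear in `M`, the bound passes through the expectation, where
uncorrelatedness kills the cross terms of `E[A Aᵀ]`, `A = ∑ β^(t-s) E_s`, leaving
`E[A Aᵀ] ⪯ (∑ β^(2(t-s))) Q² ⪯ R²` with `R = Q / √(1 - β²)`. Choosing `S = R + ε` and letting
`ε → 0` gives `E ‖A‖_* ≤ tr R`. -/

open Matrix Finset MeasureTheory ProbabilityTheory
open scoped Classical

noncomputable def psqrt {m : ℕ} (A : Matrix (Fin m) (Fin m) ℝ) : Matrix (Fin m) (Fin m) ℝ :=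
  if h : A.PosSemidef then
    (h.1.eigenvectorUnitary : Matrix (Fin m) (Fin m) ℝ) * diagonal (fun i => Real.sqrt (h.1.eigenvalues i)) *
      (star h.1.eigenvectorUnitary : Matrix (Fin m) (Fin m) ℝ)
  else 0

noncomputable def nuclearNorm {m : ℕ} {n : Type*} [Fintype n]
    (A : Matrix (Fin m) n ℝ) : ℝ :=
  (psqrt (A * Aᵀ)).trace

open scoped MatrixOrder

section TraceInequalities

variable {n : Type*} [Fintype n] [DecidableEq n]

lemma trace_mul_nonneg {A B : Matrix n n ℝ} (hA : A.PosSemidef) (hB : B.PosSemidef) :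
    0 ≤ (A * B).trace := by
  have hsB := (CFC.sqrt_nonneg B).posSemidef
  rw [← CFC.sqrt_mul_sqrt_self B hB.nonneg, ← Matrix.mul_assoc, trace_mul_cycle]
  nth_rw 1 [← hsB.1.eq]
  exact (hA.mul_mul_conjTranspose_same _).trace_nonneg

lemma trace_sqrt_le {S M : Matrix n n ℝ} (hS : S.PosDef) (hM : M.PosSemidef) :
    (CFC.sqrt M).trace ≤ ((S⁻¹ * M).trace + S.trace) / 2 := by
  set X := CFC.sqrt M
  have hX : X.IsHermitian := (CFC.sqrt_nonneg M).posSemidef.1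
  have hXX : X * X = M := CFC.sqrt_mul_sqrt_self M hM.nonneg
  have hSu : IsUnit S.det := (isUnit_iff_isUnit_det S).mp hS.isUnit
  have hsq : ((X - S) * (X - S)).PosSemidef := by
    simpa only [(hX.sub hS.isHermitian).eq] using posSemidef_conjTranspose_mul_self (X - S)
  have hexp : S⁻¹ * ((X - S) * (X - S)) = S⁻¹ * M - S⁻¹ * X * S - X + S := by
    simp only [sub_mul, mul_sub, ← hXX, ← Matrix.mul_assoc, nonsing_inv_mul S hSu,
      Matrix.one_mul]
    abel
  have hcyc : (S⁻¹ * X * S).trace = X.trace := by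
    rw [trace_mul_cycle, mul_nonsing_inv S hSu, Matrix.one_mul]
  have := trace_mul_nonneg hS.inv.posSemidef hsq
  rw [hexp, trace_add, trace_sub, trace_sub, hcyc] at this
  linarith

lemma trace_inv_add_smul_one_mul_le {R M : Matrix n n ℝ} (hR : R.PosSemidef)
    (hM : (R * R - M).PosSemidef) {ε : ℝ} (hε : 0 < ε) :
    ((R + ε • 1)⁻¹ * M).trace ≤ R.trace := by
  set S := R + ε • 1
  have hS : S.PosDef := PosDef.posSemidef_add hR (PosDef.one.smul hε)
  have hSinv := hS.inv.posSemidef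
  have hRR : R * R = S * R - ε • R := by
    simp only [S, Matrix.add_mul, smul_mul_assoc, Matrix.one_mul, add_sub_cancel_right]
  have hSR : (S⁻¹ * (S * R)).trace = R.trace := by
    rw [← Matrix.mul_assoc, nonsing_inv_mul S ((isUnit_iff_isUnit_det S).mp hS.isUnit),
      Matrix.one_mul]
  have h1 := trace_mul_nonneg hSinv hM
  have h2 := trace_mul_nonneg hSinv (hR.smul hε.le)
  rw [Matrix.mul_sub, trace_sub, hRR, Matrix.mul_sub, trace_sub, hSR] at h1
  linarith

end TraceInequalities

lemma posSemidef_smul_sub_sum_smul {n κ : Type*} [Fintype n] {B : Matrix n n ℝ}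
    (hB : B.PosSemidef) (S : Finset κ) {w : κ → ℝ} {C : κ → Matrix n n ℝ}
    (hw : ∀ s ∈ S, 0 ≤ w s) (hC : ∀ s ∈ S, (B - C s).PosSemidef) {W : ℝ}
    (hW : ∑ s ∈ S, w s ≤ W) :
    (W • B - ∑ s ∈ S, w s • C s).PosSemidef := by
  have h : W • B - ∑ s ∈ S, w s • C s
      = (W - ∑ s ∈ S, w s) • B + ∑ s ∈ S, w s • (B - C s) := by
    simp only [sub_smul, smul_sub, sum_sub_distrib, sum_smul]
    abel
  rw [h]
  exact (hB.smul (sub_nonneg.mpr hW)).add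
    (posSemidef_sum S fun s hs => (hC s hs).smul (hw s hs))

lemma psqrt_eq_sqrt {m : ℕ} {A : Matrix (Fin m) (Fin m) ℝ} (hA : A.PosSemidef) :
    psqrt A = CFC.sqrt A := by
  rw [CFC.sqrt_eq_real_sqrt A hA.nonneg, cfcₙ_eq_cfc (hf0 := Real.sqrt_zero), hA.1.cfc_eq,
    psqrt, dif_pos hA, IsHermitian.cfc, Unitary.conjStarAlgAut_apply]
  rfl

lemma nuclearNorm_eq_trace_sqrt {m : ℕ} {ι : Type*} [Fintype ι] (A : Matrix (Fin m) ι ℝ) :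
    nuclearNorm A = (CFC.sqrt (A * Aᵀ)).trace := by
  rw [nuclearNorm, psqrt_eq_sqrt (by simpa using posSemidef_self_mul_conjTranspose A)]

lemma sum_Icc_pow_sub_sq_le {β : ℝ} (hβ : |β| < 1) (t : ℕ) :
    ∑ s ∈ Icc 1 t, (β ^ (t - s)) ^ 2 ≤ (1 - β ^ 2)⁻¹ := by
  have h0 : 0 ≤ β ^ 2 := sq_nonneg β
  have h1 : β ^ 2 < 1 := (sq_lt_one_iff_abs_lt_one β).mpr hβ
  have hgeom : ∑ s ∈ Icc 1 t, (β ^ (t - s)) ^ 2 = ∑ k ∈ range t, (β ^ 2) ^ k := by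
    rw [← sum_range_reflect, ← Ico_add_one_right_eq_Icc, sum_Ico_eq_sum_range,
      Nat.add_sub_cancel]
    refine sum_congr rfl fun k _ => ?_
    rw [← pow_mul, ← pow_mul, mul_comm, Nat.sub_sub]
  rw [hgeom, ← tsum_geometric_of_lt_one h0 h1]
  exact (summable_geometric_of_lt_one h0 h1).sum_le_tsum _ fun k _ => pow_nonneg h0 k

lemma sum_smul_mul_transpose_apply {κ m ι : Type*} [Fintype ι] (S : Finset κ) (c : κ → ℝ)
    (E : κ → Matrix m ι ℝ) (i j : m) :
    ((∑ s ∈ S, c s • E s) * (∑ s ∈ S, c s • E s)ᵀ) i j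
      = ∑ s ∈ S, ∑ r ∈ S, c s * c r * (E s * (E r)ᵀ) i j := by
  rw [transpose_sum, Matrix.sum_mul]
  simp only [Matrix.mul_sum, transpose_smul, Matrix.smul_mul, Matrix.mul_smul, smul_smul,
    Matrix.sum_apply, Matrix.smul_apply, smul_eq_mul]
  exact sum_congr rfl fun s _ => sum_congr rfl fun r _ => by ring

section Expectation

variable {Ω : Type*} [MeasurableSpace Ω] {P : Measure Ω}

lemma integrable_trace_mul {n : Type*} [Fintype n] (B : Matrix n n ℝ) {X : Ω → Matrix n n ℝ}
    (hX : ∀ i j, Integrable (fun ω => X ω i j) P) :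
    Integrable (fun ω => (B * X ω).trace) P := by
  simp only [trace, Matrix.diag, mul_apply]
  exact integrable_finsetSum _ fun i _ => integrable_finsetSum _ fun j _ =>
    (hX j i).const_mul (B i j)

lemma integral_trace_mul {n : Type*} [Fintype n] (B : Matrix n n ℝ) {X : Ω → Matrix n n ℝ}
    (hX : ∀ i j, Integrable (fun ω => X ω i j) P) :
    ∫ ω, (B * X ω).trace ∂P = (B * of fun i j => ∫ ω, X ω i j ∂P).trace := by
  simp only [trace, Matrix.diag, mul_apply, of_apply]
  rw [integral_finsetSum _ fun i _ => integrable_finsetSum _ fun j _ =>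
    (hX j i).const_mul (B i j)]
  simp only [integral_finsetSum _ fun j _ => (hX j _).const_mul _, integral_const_mul]

theorem integral_nuclearNorm_le_trace [IsProbabilityMeasure P] {m : ℕ} {ι : Type*} [Fintype ι]
    {A : Ω → Matrix (Fin m) ι ℝ} (hA : ∀ i j, Integrable (fun ω => (A ω * (A ω)ᵀ) i j) P)
    (hnn : Integrable (fun ω => nuclearNorm (A ω)) P) {R : Matrix (Fin m) (Fin m) ℝ}
    (hR : R.PosSemidef) (hle : (R * R - of fun i j => ∫ ω, (A ω * (A ω)ᵀ) i j ∂P).PosSemidef) :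
    ∫ ω, nuclearNorm (A ω) ∂P ≤ R.trace := by
  have key : ∀ ε > 0, ∫ ω, nuclearNorm (A ω) ∂P ≤ R.trace + ε * m / 2 := by
    intro ε hε
    set S := R + ε • 1
    have hS : S.PosDef := PosDef.posSemidef_add hR (PosDef.one.smul hε)
    calc ∫ ω, nuclearNorm (A ω) ∂P
        ≤ ∫ ω, ((S⁻¹ * (A ω * (A ω)ᵀ)).trace + S.trace) / 2 ∂P := by
          refine integral_mono hnn
            (((integrable_trace_mul _ hA).add (integrable_const _)).div_const 2) fun ω => ?_
          rw [nuclearNorm_eq_trace_sqrt]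
          exact trace_sqrt_le hS (by simpa using posSemidef_self_mul_conjTranspose (A ω))
      _ = ((S⁻¹ * of fun i j => ∫ ω, (A ω * (A ω)ᵀ) i j ∂P).trace + S.trace) / 2 := by
          rw [integral_div, integral_add (integrable_trace_mul _ hA) (integrable_const _),
            integral_trace_mul _ hA, integral_const, probReal_univ, one_smul]
      _ ≤ (R.trace + S.trace) / 2 := by
          gcongr
          exact trace_inv_add_smul_one_mul_le hR hle hε
      _ = R.trace + ε * m / 2 := by
          simp only [S, trace_add, trace_smul, trace_one, Fintype.card_fin, smul_eq_mul]
          ring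
  refine le_of_forall_pos_le_add fun δ hδ => (key (δ / (m + 1)) (by positivity)).trans ?_
  have : δ / (m + 1) * m ≤ δ := by
    rw [div_mul_eq_mul_div, div_le_iff₀ (by positivity)]
    nlinarith
  linarith

end Expectation

section Uncorrelated

variable {Ω κ m ι : Type*} [Fintype ι] [MeasurableSpace Ω] {P : Measure Ω}
  (S : Finset κ) (c : κ → ℝ) {E : κ → Ω → Matrix m ι ℝ}
  (hint : ∀ s r i j, Integrable (fun ω => (E s ω * (E r ω)ᵀ) i j) P)
include hint

lemma integrable_sum_smul_mul_transpose_apply (i j : m) :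
    Integrable (fun ω => ((∑ s ∈ S, c s • E s ω) * (∑ s ∈ S, c s • E s ω)ᵀ) i j) P := by
  simp only [sum_smul_mul_transpose_apply]
  exact integrable_finsetSum _ fun s _ => integrable_finsetSum _ fun r _ =>
    (hint s r i j).const_mul _

lemma integral_sum_smul_mul_transpose
    (huncorr : ∀ s r, s ≠ r → ∀ i j, ∫ ω, (E s ω * (E r ω)ᵀ) i j ∂P = 0) :
    (of fun i j => ∫ ω, ((∑ s ∈ S, c s • E s ω) * (∑ s ∈ S, c s • E s ω)ᵀ) i j ∂P)
      = ∑ s ∈ S, c s ^ 2 • of fun i j => ∫ ω, (E s ω * (E s ω)ᵀ) i j ∂P := by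
  ext i j
  simp only [sum_smul_mul_transpose_apply, of_apply, Matrix.sum_apply, Matrix.smul_apply,
    smul_eq_mul]
  rw [integral_finsetSum _ fun s _ => integrable_finsetSum _ fun r _ =>
    (hint s r i j).const_mul _]
  refine sum_congr rfl fun s hs => ?_
  rw [integral_finsetSum _ fun r _ => (hint s r i j).const_mul _, sum_eq_single_of_mem s hs]
  · rw [integral_const_mul, sq]
  · intro r _ hrs
    rw [integral_const_mul, huncorr s r hrs.symm, mul_zero]

end Uncorrelated

theorem stmt19_general {Ω : Type*} [MeasurableSpace Ω] (P : Measure Ω) [IsProbabilityMeasure P]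
    {m n : ℕ} (t : ℕ) (β : ℝ) (hβ0 : 0 < β) (hβ1 : β < 1)
    (Q : Matrix (Fin m) (Fin m) ℝ) (hQ : Q.PosSemidef)
    (Ecal : ℕ → Ω → Matrix (Fin m) (Fin n) ℝ)
    (hint : ∀ s r i j, Integrable (fun ω => (Ecal s ω * (Ecal r ω)ᵀ) i j) P)
    (hintnn : Integrable
      (fun ω => nuclearNorm (∑ s ∈ Finset.Icc 1 t, β ^ (t - s) • Ecal s ω)) P)
    -- uncorrelated across time
    (huncorr : ∀ s r, s ≠ r → ∀ i j, ∫ ω, (Ecal s ω * (Ecal r ω)ᵀ) i j ∂P = 0)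
    -- second moment bound `E[E_s E_sᵀ] ⪯ Q²`
    (hmom : ∀ s, (Q * Q -
      Matrix.of fun i j => ∫ ω, (Ecal s ω * (Ecal s ω)ᵀ) i j ∂P).PosSemidef) :
    ∫ ω, nuclearNorm (∑ s ∈ Finset.Icc 1 t, β ^ (t - s) • Ecal s ω) ∂P
      ≤ Q.trace / Real.sqrt (1 - β ^ 2) := by
  have hβ : |β| < 1 := abs_lt.mpr ⟨by linarith, hβ1⟩
  have hgap : 0 < 1 - β ^ 2 := sub_pos.mpr ((sq_lt_one_iff_abs_lt_one β).mpr hβ)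
  set a := (Real.sqrt (1 - β ^ 2))⁻¹
  have hRR : a • Q * (a • Q) = (1 - β ^ 2)⁻¹ • (Q * Q) := by
    rw [smul_mul_smul, ← mul_inv, Real.mul_self_sqrt hgap.le]
  have hQQ : (Q * Q).PosSemidef := by simpa only [hQ.1.eq] using posSemidef_conjTranspose_mul_self Q
  have hR : (a • Q).PosSemidef := hQ.smul (by positivity)
  calc ∫ ω, nuclearNorm (∑ s ∈ Finset.Icc 1 t, β ^ (t - s) • Ecal s ω) ∂P
      ≤ (a • Q).trace := by
        refine integral_nuclearNorm_le_trace
          (integrable_sum_smul_mul_transpose_apply _ _ hint) hintnn hR ?_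
        rw [hRR, integral_sum_smul_mul_transpose _ _ hint huncorr]
        exact posSemidef_smul_sub_sum_smul hQQ _ (fun s _ => sq_nonneg _) (fun s _ => hmom s)
          (sum_Icc_pow_sub_sq_le hβ t)
    _ = Q.trace / Real.sqrt (1 - β ^ 2) := by rw [trace_smul, smul_eq_mul, div_eq_inv_mul]

/-- if random matrices `E 1, …, E t` are uncorrelated across time
(`E[E_s E_rᵀ] = 0` for `s ≠ r`) with `E[E_s E_sᵀ] ⪯ Q²` for a PSD matrix `Q`, then for
`β ∈ (0,1)`, `E‖∑_{s=1}^t β^{t−s} E_s‖_* ≤ tr(√(∑ β^{2(t−s)} Q²)) ≤ ‖Q‖_*/√(1−β²)`,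
where `‖Q‖_* = tr Q` since `Q` is PSD. -/
theorem stmt19 {Ω : Type*} [MeasurableSpace Ω] (P : Measure Ω) [IsProbabilityMeasure P]
    {m n : ℕ} (t : ℕ) (β : ℝ) (hβ0 : 0 < β) (hβ1 : β < 1)
    (Q : Matrix (Fin m) (Fin m) ℝ) (hQ : Q.PosSemidef)
    (Ecal : ℕ → Ω → Matrix (Fin m) (Fin n) ℝ)
    (hmeas : ∀ s i j, Measurable fun ω => Ecal s ω i j)
    (hint : ∀ s r i j, Integrable (fun ω => (Ecal s ω * (Ecal r ω)ᵀ) i j) P)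
    (hintnn : Integrable
      (fun ω => nuclearNorm (∑ s ∈ Finset.Icc 1 t, β ^ (t - s) • Ecal s ω)) P)
    -- uncorrelated across time
    (huncorr : ∀ s r, s ≠ r → ∀ i j, ∫ ω, (Ecal s ω * (Ecal r ω)ᵀ) i j ∂P = 0)
    -- second moment bound `E[E_s E_sᵀ] ⪯ Q²`
    (hmom : ∀ s, (Q * Q -
      Matrix.of fun i j => ∫ ω, (Ecal s ω * (Ecal s ω)ᵀ) i j ∂P).PosSemidef) :
    ∫ ω, nuclearNorm (∑ s ∈ Finset.Icc 1 t, β ^ (t - s) • Ecal s ω) ∂P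
      ≤ Q.trace / Real.sqrt (1 - β ^ 2) :=
  stmt19_general P t β hβ0 hβ1 Q hQ Ecal hint hintnn huncorr hmom
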